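/- arXiv:1803.03588 — 2 statements merged into one kernel-verified Lean document; each statement's English description precedes it below -/
import Mathlib

section
/- Let 𝓘 be a hereditary class of graphs, let σ ≥ 0 and 0 < ε ≤ 1, and suppose that for every graph G ∈ 𝓘 with n ≥ 2 vertices and every real c with 0 ≤ c ≤ 1/2 there exist disjoint nonempty subsets A, B ⊆ V(G) with |A| ≥ c^σ·n and |B| ≥ ε·n such that the edge-density between A and B is either at most c or at least 1 − c. Then there exists κ > 0 such that every graph G ∈ 𝓘 with n ≥ 2 vertices satisfies max(α(G), ω(G)) ≥ 2^{κ·√(log n · log log n)}. -/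
/-!
Write `π(G) = α(G) ω(G)` and `φ(L) = √(L log L)`. Since `max(α, ω)² ≥ π`, it suffices to
show `π(G) ≥ 2^{κ φ(log n)}`, by induction on `n`. Apply the density hypothesis with
`c = 2^{-(k+3)}`, where `2^k` just exceeds the target bound, and pass to the complement if the
pair `(A, B)` is dense. By Markov, half of `A` has at most `2c|B|` neighbours in `B` per vertex;
a stable set `T` of size `min(2^k, α(G[A']))` in this half `A'` misses three quarters `B'` of
`B`, and stable sets of `G[B']` extend `T`. Hence `π(G) ≥ min(2^k, π(G[A'])) + π(G[B'])`.
As `|A'| ≥ c^σ n / 2` and `|B'| ≥ ε n / 2`, induction reduces everything to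
`2^{κφ(L)} ≤ 2^{κφ(L-x)} + 2^{κφ(L-b)}` with `x = O(σ κ φ(L))` and `b = 1 - log ε`. This holds
because the first loss costs a factor of about `L^{-1/4}`, while the second costs only
`1 - O(L^{-1/4})`.
-/

open SimpleGraph
open scoped Classical

/-- A class of graphs (one predicate for each number of vertices) is hereditary if it is
closed under isomorphic copies of induced subgraphs. -/
def Hereditary (I : ∀ n : ℕ, SimpleGraph (Fin n) → Prop) : Prop :=
  ∀ (m n : ℕ) (G : SimpleGraph (Fin n)) (H : SimpleGraph (Fin m)),
    I n G → Nonempty (H ↪g G) → I m H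

open Finset Real

lemma Nat.min_mul_le_min_mul {N a b w : ℕ} (hbw : b ≤ w) : min N (a * b) ≤ min N a * w := by
  rcases Nat.eq_zero_or_pos w with rfl | hw
  · simp [Nat.le_zero.1 hbw]
  · calc min N (a * b) ≤ min (N * w) (a * w) :=
          min_le_min (Nat.le_mul_of_pos_right N hw) (Nat.mul_le_mul_left a hbw)
      _ = min N a * w := min_mul_mul_right N a w

lemma le_max_of_sq_le_mul₀ {R : Type*} [Semiring R] [LinearOrder R] [IsStrictOrderedRing R]
    {x a b : R} (hx : 0 ≤ x) (ha : 0 ≤ a) (hb : 0 ≤ b) (h : x ^ 2 ≤ a * b) : x ≤ max a b := by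
  refine (pow_le_pow_iff_left₀ hx (le_max_of_le_left ha) two_ne_zero).1 (h.trans ?_)
  rw [sq]
  exact mul_le_mul (le_max_left a b) (le_max_right a b) hb (le_max_of_le_left ha)

namespace SimpleGraph

variable {V W : Type*} {G : SimpleGraph V} {H : SimpleGraph W}

lemma Embedding.cliqueNum_le [Finite W] (f : G ↪g H) : G.cliqueNum ≤ H.cliqueNum := by
  obtain ⟨s, hs⟩ := G.exists_isNClique_cliqueNum
  have hclique : H.IsClique (s.map f.toEmbedding : Set W) := by
    rw [coe_map]
    rintro _ ⟨u, hu, rfl⟩ _ ⟨v, hv, rfl⟩ huv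
    exact f.map_adj_iff.2 (hs.isClique hu hv (ne_of_apply_ne _ huv))
  rw [← hs.card_eq, ← card_map f.toEmbedding]
  exact hclique.card_le_cliqueNum

lemma Embedding.indepNum_le [Finite W] (f : G ↪g H) : G.indepNum ≤ H.indepNum := by
  simpa using (Embedding.complEquiv f).cliqueNum_le

lemma Iso.cliqueNum_eq [Finite V] [Finite W] (e : G ≃g H) : G.cliqueNum = H.cliqueNum :=
  le_antisymm e.toEmbedding.cliqueNum_le e.symm.toEmbedding.cliqueNum_le

lemma Iso.indepNum_eq [Finite V] [Finite W] (e : G ≃g H) : G.indepNum = H.indepNum :=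
  le_antisymm e.toEmbedding.indepNum_le e.symm.toEmbedding.indepNum_le

lemma induce_compl (s : Set V) : Gᶜ.induce s = (G.induce s)ᶜ := by
  ext u v
  simp [Subtype.ext_iff]

lemma one_le_cliqueNum [Finite V] [Nonempty V] : 1 ≤ G.cliqueNum := by
  inhabit V
  have hclique : G.IsClique ((({default} : Finset V)) : Set V) := by simp
  simpa using hclique.card_le_cliqueNum

lemma two_le_indepNum_mul_cliqueNum [Finite V] [Nontrivial V] :
    2 ≤ G.indepNum * G.cliqueNum := by
  obtain ⟨u, v, huv⟩ := exists_pair_ne V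
  have hpair (K : SimpleGraph V) (h : K.Adj u v) : 2 ≤ K.cliqueNum := by
    have hclique : K.IsClique (({u, v} : Finset V) : Set V) := by
      rw [coe_pair]; exact K.isClique_pair.2 fun _ => h
    simpa [huv] using hclique.card_le_cliqueNum
  by_cases h : G.Adj u v
  · have : 1 ≤ G.indepNum := by simpa using Gᶜ.one_le_cliqueNum
    nlinarith [hpair G h]
  · have : 2 ≤ G.indepNum := by simpa using hpair Gᶜ ⟨huv, h⟩
    nlinarith [G.one_le_cliqueNum]

lemma exists_isIndepSet_subset_card_eq {s : Set V} {k : ℕ} (hk : k ≤ (G.induce s).indepNum) :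
    ∃ t : Finset V, (t : Set V) ⊆ s ∧ #t = k ∧ G.IsIndepSet t := by
  obtain ⟨u, hu⟩ := (G.induce s).exists_isNIndepSet_indepNum
  obtain ⟨u', hu'u, hu'⟩ := exists_subset_card_eq (hu.card_eq ▸ hk)
  refine ⟨u'.map (Function.Embedding.subtype _), ?_, by rw [card_map, hu'], ?_⟩
  · rw [coe_map]
    rintro _ ⟨x, -, rfl⟩
    exact x.2
  · rw [coe_map]
    rintro _ ⟨x, hx, rfl⟩ _ ⟨y, hy, rfl⟩ hxy
    exact hu.isIndepSet (hu'u hx) (hu'u hy) (ne_of_apply_ne _ hxy)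

lemma IsIndepSet.union {s t : Set V} (hs : G.IsIndepSet s) (ht : G.IsIndepSet t)
    (hst : ∀ a ∈ s, ∀ b ∈ t, ¬ G.Adj a b) : G.IsIndepSet (s ∪ t) :=
  have : Std.Symm fun u v => ¬ G.Adj u v := ⟨fun _ _ h h' => h h'.symm⟩
  Set.pairwise_union_of_symm.2
    ⟨hs, ht, fun a ha b hb _ => hst a ha b hb⟩

lemma card_interedges_eq_sum (s t : Finset V) :
    #(G.interedges s t) = ∑ a ∈ s, #{b ∈ t | G.Adj a b} := by
  rw [interedges_def, card_filter, sum_product]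
  simp only [card_filter]

lemma card_interedges_le_of_edgeDensity_le {s t : Finset V} {c : ℝ} (hc : 0 ≤ c)
    (hd : (G.edgeDensity s t : ℝ) ≤ c) : (#(G.interedges s t) : ℝ) ≤ c * #s * #t := by
  have hle := G.card_interedges_le_mul s t
  rcases Nat.eq_zero_or_pos (#s * #t) with h0 | hpos
  · rw [h0, Nat.le_zero] at hle
    rw [hle, Nat.cast_zero]
    positivity
  · rw [edgeDensity_def] at hd
    push_cast at hd
    rw [div_le_iff₀ (by exact_mod_cast hpos)] at hd
    linarith

lemma exists_subset_two_mul_card_ge_forall_card_adj_le {s t : Finset V} {c : ℝ} (hc : 0 < c)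
    (hd : (G.edgeDensity s t : ℝ) ≤ c) :
    ∃ s' ⊆ s, #s ≤ 2 * #s' ∧ ∀ a ∈ s', (#{b ∈ t | G.Adj a b} : ℝ) ≤ 2 * c * #t := by
  set s' := {a ∈ s | (#{b ∈ t | G.Adj a b} : ℝ) ≤ 2 * c * #t}
  refine ⟨s', filter_subset _ _, ?_, fun a ha => (mem_filter.1 ha).2⟩
  rcases t.eq_empty_or_nonempty with rfl | ht
  · simp [s']
    omega
  have hbad : (#(s \ s') : ℝ) * (2 * c * #t) ≤ c * #s * #t := calc
    _ = ∑ a ∈ s \ s', 2 * c * (#t : ℝ) := by rw [sum_const, nsmul_eq_mul]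
    _ ≤ ∑ a ∈ s \ s', (#{b ∈ t | G.Adj a b} : ℝ) := by
      refine sum_le_sum fun a ha => ?_
      simp only [s', mem_sdiff, mem_filter, not_and, not_le] at ha
      exact (ha.2 ha.1).le
    _ ≤ ∑ a ∈ s, (#{b ∈ t | G.Adj a b} : ℝ) :=
      sum_le_sum_of_subset_of_nonneg sdiff_subset fun _ _ _ => by positivity
    _ = #(G.interedges s t) := by rw [card_interedges_eq_sum]; push_cast; rfl
    _ ≤ c * #s * #t := card_interedges_le_of_edgeDensity_le hc.le hd
  have hct : 0 < c * #t := mul_pos hc (by exact_mod_cast ht.card_pos)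
  have hsplit : (#(s \ s') : ℝ) + #s' = #s := by
    exact_mod_cast card_sdiff_add_card_eq_card (filter_subset _ _)
  have : (#(s \ s') : ℝ) * 2 ≤ #s := by nlinarith
  exact_mod_cast (by linarith : (#s : ℝ) ≤ 2 * #s')

lemma exists_subset_forall_not_adj_card_le_add_sum (S t : Finset V) :
    ∃ t' ⊆ t, (∀ a ∈ S, ∀ b ∈ t', ¬ G.Adj a b) ∧
      #t ≤ #t' + ∑ a ∈ S, #{b ∈ t | G.Adj a b} := by
  refine ⟨{b ∈ t | ∀ a ∈ S, ¬ G.Adj a b}, filter_subset _ _,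
    fun a ha b hb => (mem_filter.1 hb).2 a ha, ?_⟩
  rw [← card_filter_add_card_filter_not (s := t) (fun b => ∀ a ∈ S, ¬ G.Adj a b)]
  refine Nat.add_le_add_left ((card_le_card fun b hb => ?_).trans card_biUnion_le) _
  simp only [mem_filter, not_forall, not_not] at hb
  obtain ⟨hbt, a, haS, hab⟩ := hb
  exact mem_biUnion.2 ⟨a, haS, mem_filter.2 ⟨hbt, hab⟩⟩

variable [Fintype V]

lemma min_add_le_indepNum_mul_cliqueNum {S T U : Finset V} (N : ℕ) (hSU : Disjoint S U)
    (hT : G.IsIndepSet T) (hTS : T ⊆ S) (hTcard : #T = min N (G.induce S).indepNum)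
    (hTU : ∀ a ∈ T, ∀ b ∈ U, ¬ G.Adj a b) :
    min N ((G.induce S).indepNum * (G.induce S).cliqueNum) +
      (G.induce U).indepNum * (G.induce U).cliqueNum ≤ G.indepNum * G.cliqueNum := by
  obtain ⟨R, hRU, hR, hRind⟩ := exists_isIndepSet_subset_card_eq (G := G) (s := U) le_rfl
  have hTR : Disjoint T R := disjoint_of_subset_left hTS (disjoint_of_subset_right hRU hSU)
  have hunion : G.IsIndepSet (T ∪ R : Finset V) := by
    rw [coe_union]
    exact hT.union hRind fun a ha b hb => hTU a ha b (hRU hb)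
  have hindep : #T + (G.induce U).indepNum ≤ G.indepNum := by
    rw [← hR, ← card_union_of_disjoint hTR]
    exact hunion.card_le_indepNum
  calc _ ≤ min N (G.induce S).indepNum * G.cliqueNum +
          (G.induce U).indepNum * G.cliqueNum :=
        add_le_add (Nat.min_mul_le_min_mul (cliqueNum_induce_le _))
          (Nat.mul_le_mul_left _ (cliqueNum_induce_le _))
    _ = (#T + (G.induce U).indepNum) * G.cliqueNum := by rw [hTcard, add_mul]
    _ ≤ G.indepNum * G.cliqueNum := Nat.mul_le_mul_right _ hindep

theorem exists_subsets_min_add_le_indepNum_mul_cliqueNum {A B : Finset V}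
    (hAB : Disjoint A B) {c : ℝ} (hc : 0 < c) (hd : (G.edgeDensity A B : ℝ) ≤ c) {N : ℕ}
    (hN : 8 * N * c ≤ 1) :
    ∃ A' ⊆ A, ∃ B' ⊆ B, #A ≤ 2 * #A' ∧ 3 * #B ≤ 4 * #B' ∧
      min N ((G.induce A').indepNum * (G.induce A').cliqueNum) +
        (G.induce B').indepNum * (G.induce B').cliqueNum ≤ G.indepNum * G.cliqueNum := by
  obtain ⟨A', hA'A, hA', hdeg⟩ := exists_subset_two_mul_card_ge_forall_card_adj_le hc hd
  obtain ⟨T, hTA', hT, hTind⟩ :=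
    exists_isIndepSet_subset_card_eq (G := G) (s := A') (min_le_right N _)
  rw [coe_subset] at hTA'
  obtain ⟨B', hB'B, hTB', hcover⟩ := G.exists_subset_forall_not_adj_card_le_add_sum T B
  refine ⟨A', hA'A, B', hB'B, hA', ?_, min_add_le_indepNum_mul_cliqueNum N
    (disjoint_of_subset_left hA'A (disjoint_of_subset_right hB'B hAB)) hTind hTA' hT hTB'⟩
  -- each vertex of `T` has at most `2c|B|` neighbours in `B`, and `|T| ≤ N ≤ 1/(8c)`
  have hsum : ∑ a ∈ T, (#{b ∈ B | G.Adj a b} : ℝ) ≤ #T * (2 * c * #B) := by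
    rw [← nsmul_eq_mul, ← sum_const]
    exact sum_le_sum fun a ha => hdeg a (hTA' ha)
  have hTN : (#T : ℝ) ≤ N := by exact_mod_cast hT ▸ min_le_left _ _
  have hkill : (#T : ℝ) * (2 * c * #B) ≤ #B / 4 := calc
    _ ≤ N * (2 * c * #B) := mul_le_mul_of_nonneg_right hTN (by positivity)
    _ ≤ #B / 4 := by nlinarith [(by positivity : (0 : ℝ) ≤ #B)]
  have hcover : (#B : ℝ) ≤ #B' + ∑ a ∈ T, (#{b ∈ B | G.Adj a b} : ℝ) := by
    exact_mod_cast hcover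
  exact_mod_cast (by linarith : (3 * #B : ℝ) ≤ 4 * #B')

theorem exists_subsets_min_add_le_indepNum_mul_cliqueNum_of_edgeDensity {A B : Finset V}
    (hAB : Disjoint A B) (hA : A.Nonempty) (hB : B.Nonempty) {c : ℝ} (hc : 0 < c)
    (hd : (G.edgeDensity A B : ℝ) ≤ c ∨ 1 - c ≤ (G.edgeDensity A B : ℝ))
    {N : ℕ} (hN : 8 * N * c ≤ 1) :
    ∃ A' ⊆ A, ∃ B' ⊆ B, #A ≤ 2 * #A' ∧ 3 * #B ≤ 4 * #B' ∧
      min N ((G.induce A').indepNum * (G.induce A').cliqueNum) +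
        (G.induce B').indepNum * (G.induce B').cliqueNum ≤ G.indepNum * G.cliqueNum := by
  rcases hd with hd | hd
  · exact exists_subsets_min_add_le_indepNum_mul_cliqueNum hAB hc hd hN
  · have hsum : (G.edgeDensity A B : ℝ) + (Gᶜ.edgeDensity A B : ℝ) = 1 := by
      exact_mod_cast G.edgeDensity_add_edgeDensity_compl hA hB hAB
    -- `convert` reconciles the two decidability instances of `Gᶜ.Adj`
    obtain ⟨A', hA'A, B', hB'B, hA', hB', h⟩ :=
      exists_subsets_min_add_le_indepNum_mul_cliqueNum (G := Gᶜ) hAB hc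
        (by convert (by linarith : (Gᶜ.edgeDensity A B : ℝ) ≤ c)) hN
    refine ⟨A', hA'A, B', hB'B, hA', hB', ?_⟩
    simpa only [induce_compl, indepNum_compl, cliqueNum_compl, mul_comm] using h

end SimpleGraph

noncomputable def sqrtMulLogb (L : ℝ) : ℝ := √(L * logb 2 L)

lemma sqrtMulLogb_nonneg (L : ℝ) : 0 ≤ sqrtMulLogb L := sqrt_nonneg _

lemma logb_two_le_four_mul_sqrt {x : ℝ} (hx : 0 ≤ x) : logb 2 x ≤ 4 * √x := by
  have hlog : log x ≤ 2 * √x := calc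
    log x ≤ x ^ (1 / 2 : ℝ) / (1 / 2) := log_le_rpow_div hx (by norm_num)
    _ = 2 * √x := by rw [sqrt_eq_rpow]; ring
  rw [logb, div_le_iff₀ (log_pos one_lt_two)]
  nlinarith [log_two_gt_d9, sqrt_nonneg x]

lemma logb_two_le_two_mul_sub_one {x : ℝ} (hx : 1 ≤ x) : logb 2 x ≤ 2 * (x - 1) := by
  rw [logb, div_le_iff₀ (log_pos one_lt_two)]
  nlinarith [log_two_gt_d9, log_le_sub_one_of_pos (by linarith : 0 < x)]

lemma mul_logb_le_mul_logb {l L : ℝ} (hl : 1 ≤ l) (hlL : l ≤ L) :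
    l * logb 2 l ≤ L * logb 2 L :=
  mul_le_mul hlL (logb_le_logb_of_le one_lt_two (by linarith) hlL)
    (logb_nonneg one_lt_two hl) (by linarith)

lemma mul_logb_sub_mul_logb_le {l L : ℝ} (hl : 1 ≤ l) (hlL : l ≤ L) :
    L * logb 2 L - l * logb 2 l ≤ (L - l) * (logb 2 L + 2) := by
  have hl0 : 0 < l := by linarith
  have hquot : logb 2 L - logb 2 l ≤ 2 * (L / l - 1) := by
    rw [← logb_div (by linarith) hl0.ne']
    exact logb_two_le_two_mul_sub_one ((one_le_div hl0).2 hlL)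
  have : l * (logb 2 L - logb 2 l) ≤ 2 * (L - l) := by
    calc l * (logb 2 L - logb 2 l) ≤ l * (2 * (L / l - 1)) := by gcongr
      _ = 2 * (L - l) := by field_simp
  nlinarith

lemma sqrt_sub_sqrt_le_div {a b : ℝ} (hb : 0 ≤ b) (hba : b ≤ a) :
    √a - √b ≤ (a - b) / √a := by
  rcases (sqrt_nonneg a).eq_or_lt with ha | ha
  · rw [← ha, div_zero, sub_nonpos]
    exact sqrt_nonneg b
  · rw [le_div_iff₀ ha]
    nlinarith [mul_self_sqrt (hb.trans hba), mul_self_sqrt hb, sqrt_le_sqrt hba, sqrt_nonneg b]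

lemma sqrtMulLogb_le_sqrtMulLogb {l L : ℝ} (hl : 1 ≤ l) (hlL : l ≤ L) :
    sqrtMulLogb l ≤ sqrtMulLogb L :=
  sqrt_le_sqrt (mul_logb_le_mul_logb hl hlL)

lemma sqrtMulLogb_sub_le {l L : ℝ} (hl : 1 ≤ l) (hlL : l ≤ L) :
    sqrtMulLogb L - sqrtMulLogb l ≤ (L - l) * (logb 2 L + 2) / sqrtMulLogb L :=
  (sqrt_sub_sqrt_le_div (mul_nonneg (by linarith) (logb_nonneg one_lt_two hl))
    (mul_logb_le_mul_logb hl hlL)).trans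
    (div_le_div_of_nonneg_right (mul_logb_sub_mul_logb_le hl hlL) (sqrt_nonneg _))

lemma sqrtMulLogb_le_two_mul {L : ℝ} (hL : 1 ≤ L) : sqrtMulLogb L ≤ 2 * L := by
  have hlg := logb_two_le_four_mul_sqrt (by linarith : (0 : ℝ) ≤ L)
  have hsqrt : √L ≤ L := by
    nlinarith [mul_self_sqrt (by linarith : (0 : ℝ) ≤ L), sqrt_nonneg L]
  refine sqrt_le_iff.2 ⟨by linarith, ?_⟩
  nlinarith

lemma logb_add_two_div_sqrtMulLogb_le {L : ℝ} (hL : 16 ≤ L) :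
    (logb 2 L + 2) / sqrtMulLogb L ≤ 4 / 2 ^ (logb 2 L / 4) := by
  have hL0 : 0 < L := by linarith
  set lg := logb 2 L with hlg_def
  set q : ℝ := 2 ^ (lg / 4)
  have hlg : 4 ≤ lg := by
    calc (4 : ℝ) = logb 2 16 := by
          rw [show (16 : ℝ) = 2 ^ (4 : ℝ) by norm_num, logb_rpow two_pos (by norm_num)]
      _ ≤ lg := logb_le_logb_of_le one_lt_two (by norm_num) hL
  have hq : 0 < q := by positivity
  have hq4 : q ^ 2 * q ^ 2 = L := by
    rw [← pow_add, ← rpow_natCast, ← rpow_mul zero_le_two, hlg_def]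
    norm_num
    exact rpow_logb two_pos (by norm_num) hL0
  have hsqrtL : √L = q ^ 2 := by rw [← hq4, sqrt_mul_self (by positivity)]
  have ht : √lg * √lg = lg := mul_self_sqrt (by linarith)
  have ht2 : 2 ≤ √lg := by nlinarith [sqrt_nonneg lg]
  have ht2q : √lg ≤ 2 * q := by
    have := logb_two_le_four_mul_sqrt hL0.le
    rw [← hlg_def, hsqrtL] at this
    nlinarith [sqrt_nonneg lg]
  rw [sqrtMulLogb, sqrt_mul hL0.le, hsqrtL, div_le_div_iff₀ (by positivity) hq]
  nlinarith [mul_pos hq (by linarith : (0 : ℝ) < √lg)]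

lemma two_rpow_logb_sub {y : ℝ} (hy : 0 < y) (a : ℝ) :
    (2 : ℝ) ^ (logb 2 y - a) = 2 ^ (-a) * y := by
  rw [sub_eq_neg_add, rpow_add two_pos, rpow_logb two_pos (by norm_num) hy]

lemma one_sub_le_two_rpow_neg {d : ℝ} (hd : 0 ≤ d) : 1 - d ≤ (2 : ℝ) ^ (-d) := by
  rw [rpow_def_of_pos two_pos]
  nlinarith [add_one_le_exp (log 2 * -d), log_two_lt_d9, log_two_gt_d9]

lemma two_rpow_le_add_two_rpow {a u v w : ℝ} (hv : u - v ≤ a + 1) (hwu : w ≤ u)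
    (hw : u - w ≤ 1 / (4 * 2 ^ a)) : (2 : ℝ) ^ u ≤ 2 ^ v + 2 ^ w := by
  set p : ℝ := 2 ^ a
  have hp : 0 < p := by positivity
  have hu : (0 : ℝ) < 2 ^ u := by positivity
  have hv' : 2 ^ u / (2 * p) ≤ (2 : ℝ) ^ v := by
    rw [div_le_iff₀ (by positivity)]
    calc (2 : ℝ) ^ u = 2 ^ v * 2 ^ (u - v) := by rw [← rpow_add two_pos]; ring_nf
      _ ≤ 2 ^ v * 2 ^ (a + 1) := by gcongr; norm_num
      _ = 2 ^ v * (2 * p) := by rw [rpow_add two_pos, rpow_one]; ring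
  have hw' : 2 ^ u * (1 - 1 / (4 * p)) ≤ (2 : ℝ) ^ w :=
    calc 2 ^ u * (1 - 1 / (4 * p)) ≤ 2 ^ u * (1 - (u - w)) := by gcongr
      _ ≤ 2 ^ u * 2 ^ (-(u - w)) := by gcongr; exact one_sub_le_two_rpow_neg (by linarith)
      _ = 2 ^ w := by rw [← rpow_add two_pos]; ring_nf
  have : 2 ^ u / (4 * p) ≤ 2 ^ u / (2 * p) := by gcongr; norm_num
  have : (2 : ℝ) ^ u * (1 - 1 / (4 * p)) = 2 ^ u - 2 ^ u / (4 * p) := by ring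
  linarith

section Recurrence

variable {σ κ b L x : ℝ}

lemma one_le_sub_of_le_mul_sqrtMulLogb (hσ : 0 ≤ σ) (hκ : 0 ≤ κ) (hκσ : 4 * κ * (4 * σ + 1) ≤ 1)
    (hL : 10 * σ + 16 ≤ L) (hx : x ≤ σ * (κ * sqrtMulLogb L + 4) + 1) : 1 ≤ L - x := by
  have hφ := sqrtMulLogb_le_two_mul (by linarith : 1 ≤ L)
  have hσκ : σ * κ ≤ 1 / 16 := by nlinarith
  have : σ * κ * sqrtMulLogb L ≤ 1 / 16 * (2 * L) :=
    mul_le_mul hσκ hφ (sqrt_nonneg _) (by norm_num)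
  nlinarith

theorem two_rpow_mul_sqrtMulLogb_le_add (hσ : 0 ≤ σ) (hb : 0 ≤ b) (hκ : 0 ≤ κ)
    (hκσ : 4 * κ * (4 * σ + 1) ≤ 1) (hκb : 16 * κ * b ≤ 1) (hL : 10 * σ + b + 16 ≤ L)
    (hx0 : 0 ≤ x) (hx : x ≤ σ * (κ * sqrtMulLogb L + 4) + 1) :
    (2 : ℝ) ^ (κ * sqrtMulLogb L) ≤
      2 ^ (κ * sqrtMulLogb (L - x)) + 2 ^ (κ * sqrtMulLogb (L - b)) := by
  set lg := logb 2 L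
  set p : ℝ := 2 ^ (lg / 4)
  have hlg : 1 ≤ lg := (logb_self_eq_one one_lt_two).symm.le.trans
    (logb_le_logb_of_le one_lt_two two_pos (by linarith))
  have hφ : 0 < sqrtMulLogb L :=
    sqrt_pos.2 (mul_pos (by linarith) (logb_pos one_lt_two (by linarith)))
  set r := (lg + 2) / sqrtMulLogb L
  have hr0 : 0 ≤ r := div_nonneg (by linarith) hφ.le
  have hrφ : sqrtMulLogb L * r = lg + 2 := mul_div_cancel₀ _ hφ.ne'
  have hr : r ≤ 4 / p := logb_add_two_div_sqrtMulLogb_le (by linarith)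
  have hp : 1 ≤ p := one_le_rpow one_le_two (by linarith)
  have hxL := one_le_sub_of_le_mul_sqrtMulLogb hσ hκ hκσ (by linarith) hx
  have hbL : 1 ≤ L - b := by linarith
  have hgap {l : ℝ} (hl : 1 ≤ l) (hlL : l ≤ L) :
      κ * sqrtMulLogb L - κ * sqrtMulLogb l ≤ κ * ((L - l) * r) := by
    rw [← mul_sub, ← mul_div_assoc]
    exact mul_le_mul_of_nonneg_left (sqrtMulLogb_sub_le hl hlL) hκ
  apply two_rpow_le_add_two_rpow (a := lg / 4)
  · have hσκ : σ * κ * κ ≤ 1 / 64 := by nlinarith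
    have hpinv : κ * (4 * σ + 1) * (4 / p) ≤ 1 := by
      rw [mul_div_assoc', div_le_one (by positivity)]
      nlinarith
    calc _ ≤ κ * (x * r) := by simpa using hgap hxL (by linarith)
      _ ≤ κ * ((σ * (κ * sqrtMulLogb L + 4) + 1) * r) := by gcongr
      _ = σ * κ * κ * (lg + 2) + κ * (4 * σ + 1) * r := by rw [← hrφ]; ring
      _ ≤ 1 / 64 * (lg + 2) + κ * (4 * σ + 1) * (4 / p) := by gcongr
      _ ≤ lg / 4 + 1 := by linarith
  · gcongr
    exact sqrtMulLogb_le_sqrtMulLogb hbL (by linarith)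
  · calc _ ≤ κ * (b * r) := by simpa using hgap hbL (by linarith)
      _ ≤ κ * (b * (4 / p)) := by gcongr
      _ = 16 * κ * b * (1 / (4 * p)) := by field_simp; ring
      _ ≤ 1 / (4 * p) := mul_le_of_le_one_left (by positivity) hκb

end Recurrence

def PolynomialDensity (I : ∀ n : ℕ, SimpleGraph (Fin n) → Prop) (σ ε : ℝ) : Prop :=
  ∀ (n : ℕ) (G : SimpleGraph (Fin n)), 2 ≤ n → I n G →
    ∀ c : ℝ, 0 ≤ c → c ≤ 1 / 2 →
      ∃ A B : Finset (Fin n), Disjoint A B ∧ A.Nonempty ∧ B.Nonempty ∧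
        c ^ σ * n ≤ (A.card : ℝ) ∧ ε * n ≤ (B.card : ℝ) ∧
        ((G.edgeDensity A B : ℝ) ≤ c ∨ 1 - c ≤ (G.edgeDensity A B : ℝ))

section HereditaryClass

variable {I : ∀ n : ℕ, SimpleGraph (Fin n) → Prop} {n : ℕ} {G : SimpleGraph (Fin n)}
  {σ ε b κ : ℝ}

lemma two_rpow_le_indepNum_mul_cliqueNum_induce (hI : Hereditary I) (hκ : 0 ≤ κ)
    (IH : ∀ m < n, ∀ H : SimpleGraph (Fin m), 2 ≤ m → I m H →
      (2 : ℝ) ^ (κ * sqrtMulLogb (logb 2 m)) ≤ H.indepNum * H.cliqueNum)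
    (hG : I n G) {S : Finset (Fin n)} (hS : #S < n) {l : ℝ} (hl : 1 ≤ l)
    (hlS : (2 : ℝ) ^ l ≤ #S) :
    (2 : ℝ) ^ (κ * sqrtMulLogb l) ≤ (G.induce S).indepNum * (G.induce S).cliqueNum := by
  let e := Iso.comap S.equivFin.symm (G.induce S)
  have hS2 : (2 : ℝ) ≤ #S :=
    le_trans (by simpa using rpow_le_rpow_of_exponent_le one_le_two hl) hlS
  have hlog : l ≤ logb 2 #S := (le_logb_iff_rpow_le one_lt_two (by linarith)).2 hlS
  calc (2 : ℝ) ^ (κ * sqrtMulLogb l) ≤ 2 ^ (κ * sqrtMulLogb (logb 2 #S)) := by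
        gcongr
        · norm_num
        · exact sqrtMulLogb_le_sqrtMulLogb hl hlog
    _ ≤ _ := IH #S hS _ (by exact_mod_cast hS2)
          (hI _ _ G _ hG ⟨(Embedding.induce (S : Set (Fin n))).comp e.toEmbedding⟩)
    _ = _ := by rw [e.indepNum_eq, e.cliqueNum_eq]

theorem exists_subsets_two_rpow_le_card_min_add_le (hdens : PolynomialDensity I σ ε)
    (hεb : (2 : ℝ) ^ (-b) ≤ ε / 2) (hn : 2 ≤ n) (hG : I n G) (k : ℕ) :
    ∃ A' B' : Finset (Fin n), #A' < n ∧ #B' < n ∧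
      (2 : ℝ) ^ (logb 2 n - (σ * (k + 3) + 1)) ≤ #A' ∧ (2 : ℝ) ^ (logb 2 n - b) ≤ #B' ∧
      min (2 ^ k) ((G.induce A').indepNum * (G.induce A').cliqueNum) +
        (G.induce B').indepNum * (G.induce B').cliqueNum ≤ G.indepNum * G.cliqueNum := by
  set c : ℝ := 2 ^ (-((k : ℝ) + 3))
  have hc0 : 0 < c := by positivity
  have hc : c ≤ 1 / 2 := by
    calc c ≤ 2 ^ (-1 : ℝ) := rpow_le_rpow_of_exponent_le one_le_two (by linarith)
      _ = 1 / 2 := by norm_num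
  have hN : 8 * ((2 ^ k : ℕ) : ℝ) * c ≤ 1 := by
    rw [Nat.cast_pow, Nat.cast_ofNat, ← rpow_natCast, show (8 : ℝ) = 2 ^ (3 : ℝ) by norm_num,
      ← rpow_add two_pos, ← rpow_add two_pos]
    ring_nf
    simp
  obtain ⟨A, B, hAB, hA, hB, hAcard, hBcard, hd⟩ := hdens n G hn hG c hc0.le hc
  obtain ⟨A', hA'A, B', hB'B, hA', hB', hπ⟩ :=
    G.exists_subsets_min_add_le_indepNum_mul_cliqueNum_of_edgeDensity hAB hA hB hc0 hd hN
  have hcard : #A + #B ≤ n := by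
    simpa [card_union_of_disjoint hAB] using card_le_univ (A ∪ B)
  have hn0 : (0 : ℝ) < n := by positivity
  refine ⟨A', B', by have := card_le_card hA'A; have := hB.card_pos; omega,
    by have := card_le_card hB'B; have := hA.card_pos; omega, ?_, ?_, hπ⟩
  · have hloss : (2 : ℝ) ^ (-(σ * (k + 3) + 1)) = c ^ σ / 2 := by
      rw [← rpow_mul zero_le_two, show -(σ * (k + 3) + 1) = -((k : ℝ) + 3) * σ + -1 by ring,
        rpow_add two_pos, rpow_neg_one, div_eq_mul_inv]
    have : (#A : ℝ) ≤ 2 * #A' := by exact_mod_cast hA'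
    rw [two_rpow_logb_sub hn0, hloss]
    linarith
  · have : (3 * #B : ℝ) ≤ 4 * #B' := by exact_mod_cast hB'
    have hε : 0 ≤ ε := by linarith [(by positivity : (0 : ℝ) < 2 ^ (-b))]
    rw [two_rpow_logb_sub hn0]
    nlinarith [mul_le_mul_of_nonneg_right hεb hn0.le, mul_nonneg hε hn0.le]

theorem two_rpow_le_indepNum_mul_cliqueNum_of_forall_lt (hI : Hereditary I)
    (hdens : PolynomialDensity I σ ε) (hσ : 0 ≤ σ) (hb : 0 ≤ b) (hεb : (2 : ℝ) ^ (-b) ≤ ε / 2)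
    (hκ : 0 ≤ κ) (hκσ : 4 * κ * (4 * σ + 1) ≤ 1) (hκb : 16 * κ * b ≤ 1)
    (hn : 2 ≤ n) (hG : I n G) (hL : 10 * σ + b + 16 ≤ logb 2 n)
    (IH : ∀ m < n, ∀ H : SimpleGraph (Fin m), 2 ≤ m → I m H →
      (2 : ℝ) ^ (κ * sqrtMulLogb (logb 2 m)) ≤ H.indepNum * H.cliqueNum) :
    (2 : ℝ) ^ (κ * sqrtMulLogb (logb 2 n)) ≤ G.indepNum * G.cliqueNum := by
  set L := logb 2 n
  set k := ⌈κ * sqrtMulLogb L⌉₊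
  set x := σ * (k + 3) + 1
  obtain ⟨A', B', hA'n, hB'n, hA', hB', hπ⟩ :=
    exists_subsets_two_rpow_le_card_min_add_le hdens hεb hn hG k
  have hx0 : 0 ≤ x := by positivity
  have hx : x ≤ σ * (κ * sqrtMulLogb L + 4) + 1 := by
    have := Nat.ceil_lt_add_one (mul_nonneg hκ (sqrtMulLogb_nonneg L))
    nlinarith
  have hxL := one_le_sub_of_le_mul_sqrtMulLogb hσ hκ hκσ (by linarith) hx
  have hk : (2 : ℝ) ^ (κ * sqrtMulLogb (L - x)) ≤ ((2 ^ k : ℕ) : ℝ) := by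
    rw [Nat.cast_pow, Nat.cast_ofNat, ← rpow_natCast]
    gcongr
    · norm_num
    · calc κ * sqrtMulLogb (L - x) ≤ κ * sqrtMulLogb L := by
            gcongr; exact sqrtMulLogb_le_sqrtMulLogb hxL (by linarith)
        _ ≤ k := Nat.le_ceil _
  calc (2 : ℝ) ^ (κ * sqrtMulLogb L)
      ≤ 2 ^ (κ * sqrtMulLogb (L - x)) + 2 ^ (κ * sqrtMulLogb (L - b)) :=
        two_rpow_mul_sqrtMulLogb_le_add hσ hb hκ hκσ hκb hL hx0 hx
    _ ≤ min ((2 ^ k : ℕ) : ℝ) ((G.induce A').indepNum * (G.induce A').cliqueNum) +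
          (G.induce B').indepNum * (G.induce B').cliqueNum := by
        gcongr
        · exact le_min hk (two_rpow_le_indepNum_mul_cliqueNum_induce hI hκ IH hG hA'n hxL hA')
        · exact two_rpow_le_indepNum_mul_cliqueNum_induce hI hκ IH hG hB'n (by linarith) hB'
    _ ≤ G.indepNum * G.cliqueNum := by exact_mod_cast hπ

theorem two_rpow_le_indepNum_mul_cliqueNum (hI : Hereditary I)
    (hdens : PolynomialDensity I σ ε) (hσ : 0 ≤ σ) (hb : 0 ≤ b) (hεb : (2 : ℝ) ^ (-b) ≤ ε / 2)
    (hκ : 0 ≤ κ) (hκσ : 4 * κ * (4 * σ + 1) ≤ 1) (hκb : 16 * κ * b ≤ 1)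
    (hκ₀ : κ * sqrtMulLogb (10 * σ + b + 16) ≤ 1)
    (n : ℕ) (G : SimpleGraph (Fin n)) (hn : 2 ≤ n) (hG : I n G) :
    (2 : ℝ) ^ (κ * sqrtMulLogb (logb 2 n)) ≤ G.indepNum * G.cliqueNum := by
  induction n using Nat.strong_induction_on with
  | _ n IH =>
  by_cases hL : 10 * σ + b + 16 ≤ logb 2 n
  · exact two_rpow_le_indepNum_mul_cliqueNum_of_forall_lt hI hdens hσ hb hεb hκ hκσ hκb hn hG hL
      IH
  · have hlog : 1 ≤ logb 2 n := (le_logb_iff_rpow_le one_lt_two (by positivity)).2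
      (by simpa using (Nat.cast_le (α := ℝ)).2 hn)
    have : Nontrivial (Fin n) := Fin.nontrivial_iff_two_le.2 hn
    calc (2 : ℝ) ^ (κ * sqrtMulLogb (logb 2 n)) ≤ 2 ^ (1 : ℝ) := by
          gcongr
          · norm_num
          · exact (mul_le_mul_of_nonneg_left
              (sqrtMulLogb_le_sqrtMulLogb hlog (by linarith)) hκ).trans hκ₀
      _ ≤ G.indepNum * G.cliqueNum := by
          rw [rpow_one]
          exact_mod_cast G.two_le_indepNum_mul_cliqueNum

end HereditaryClass

/-- If a hereditary class `𝓘` satisfies the polynomial density property with parameters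
`σ ≥ 0` and `0 < ε ≤ 1`, then there is `κ > 0` such that every `G ∈ 𝓘` on `n ≥ 2` vertices
satisfies `max (α G) (ω G) ≥ 2 ^ (κ√(log n · log log n))` (logs base 2). -/
theorem hereditary_density_to_EH_bound
    (I : ∀ n : ℕ, SimpleGraph (Fin n) → Prop) (hI : Hereditary I)
    (σ ε : ℝ) (hσ : 0 ≤ σ) (hε0 : 0 < ε) (hε1 : ε ≤ 1)
    (hdens : ∀ (n : ℕ) (G : SimpleGraph (Fin n)), 2 ≤ n → I n G →
      ∀ c : ℝ, 0 ≤ c → c ≤ 1 / 2 →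
        ∃ A B : Finset (Fin n), Disjoint A B ∧ A.Nonempty ∧ B.Nonempty ∧
          c ^ σ * n ≤ (A.card : ℝ) ∧ ε * n ≤ (B.card : ℝ) ∧
          ((G.edgeDensity A B : ℝ) ≤ c ∨ 1 - c ≤ (G.edgeDensity A B : ℝ))) :
    ∃ κ : ℝ, 0 < κ ∧
      ∀ (n : ℕ) (G : SimpleGraph (Fin n)), 2 ≤ n → I n G →
        (2 : ℝ) ^ (κ * Real.sqrt (Real.logb 2 n * Real.logb 2 (Real.logb 2 n))) ≤
          (max (Gᶜ.cliqueNum) (G.cliqueNum) : ℝ) := by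
  set b := 1 - logb 2 ε
  have hb : 0 ≤ b := by linarith [logb_nonpos one_lt_two hε0.le hε1]
  have hεb : (2 : ℝ) ^ (-b) = ε / 2 := by
    rw [show -b = logb 2 ε - 1 by ring, rpow_sub two_pos, rpow_logb two_pos (by norm_num) hε0,
      rpow_one]
  set M := sqrtMulLogb (10 * σ + b + 16) + 4 * (4 * σ + 1) + 16 * b
  have hφ := sqrtMulLogb_nonneg (10 * σ + b + 16)
  have hM : 0 < M := by linarith
  have hκ {X : ℝ} (hX : X ≤ M) : M⁻¹ * X ≤ 1 := by rw [inv_mul_le_iff₀ hM, mul_one]; exact hX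
  refine ⟨(2 * M)⁻¹, by positivity, fun n G hn hG => ?_⟩
  have h := two_rpow_le_indepNum_mul_cliqueNum hI hdens hσ hb hεb.le (inv_nonneg.2 hM.le)
    (by linarith [hκ (X := 4 * (4 * σ + 1)) (by linarith)])
    (by linarith [hκ (X := 16 * b) (by linarith)])
    (hκ (by linarith)) n G hn hG
  rw [cliqueNum_compl]
  refine le_max_of_sq_le_mul₀ (by positivity) (Nat.cast_nonneg _) (Nat.cast_nonneg _) ?_
  calc _ = (2 : ℝ) ^ (M⁻¹ * sqrtMulLogb (logb 2 n)) := by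
        rw [← rpow_natCast, ← rpow_mul zero_le_two, sqrtMulLogb]
        congr 1
        field_simp
        ring
    _ ≤ _ := h
end

section
/- For every integer n ≥ 2 and every real c with 0 < c ≤ 1/2, either f(n) ≥ 1/(4c) or f(n) ≥ f(c^σ·n/2) + f(ε·n/2). -/
/-!
Take `G` in the class on `n` vertices with `φ(G) = f(n)` and `A`, `B` as in the density
hypothesis; in the dense case, replace adjacency by non-adjacency so that `A`, `B` are sparse.
By Markov's inequality at least half of `A` has at most `2c|B|` neighbours in `B`, so that half
contains a cograph `X` with `|X| ≥ f(c^σ n/2)`. If `φ(G) < 1/(4c)`, then `X` has fewer than `|B|/2`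
neighbours in `B` altogether, so the common non-neighbours of `X` in `B` contain a cograph `Y`
with `|Y| ≥ f(ε n/2)`. No edge (resp. every edge) of `G` runs between `X` and `Y`, and since `P₄`
and its complement are connected, `X ∪ Y` is a cograph: `f(n) = φ(G) ≥ |X| + |Y|`.
-/

open SimpleGraph
open scoped Classical

/-- A cograph is a graph with no induced path on 4 vertices. -/
def IsCograph {V : Type} (G : SimpleGraph V) : Prop :=
  ¬ Nonempty (pathGraph 4 ↪g G)

/-- `phi G` is the maximum number of vertices of an induced subgraph of `G`
that is a cograph. -/
noncomputable def phi {n : ℕ} (G : SimpleGraph (Fin n)) : ℕ :=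
  sSup {k | ∃ s : Finset (Fin n), s.card = k ∧ IsCograph (G.induce (s : Set (Fin n)))}

/-- `fI I x` is the minimum of `phi G` over graphs `G` in the class `I` with `⌈x⌉`
vertices. -/
noncomputable def fI (I : ∀ n : ℕ, SimpleGraph (Fin n) → Prop) (x : ℝ) : ℕ :=
  sInf {m | ∃ G : SimpleGraph (Fin ⌈x⌉₊), I ⌈x⌉₊ G ∧ phi G = m}

section Cograph

variable {V W : Type} {G : SimpleGraph V}

theorem isCograph_induce_iff {s : Set V} :
    IsCograph (G.induce s) ↔ ∀ φ : pathGraph 4 ↪g G, ∃ i, φ i ∉ s := by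
  constructor
  · intro h φ
    by_contra! hφ
    exact h ⟨⟨⟨fun i => ⟨φ i, hφ i⟩, fun i j hij => φ.injective (congrArg Subtype.val hij)⟩,
      φ.map_adj_iff⟩⟩
  · rintro h ⟨ψ⟩
    obtain ⟨i, hi⟩ := h ((Embedding.induce s).comp ψ)
    exact hi (ψ i).2

theorem isCograph_induce_image {H : SimpleGraph W} (θ : H ↪g G) {u : Set W}
    (hu : IsCograph (H.induce u)) : IsCograph (G.induce (θ '' u)) := by
  rw [isCograph_induce_iff] at hu ⊢
  intro φ
  by_contra! hφ
  choose v hvu hv using hφ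
  obtain ⟨i, hi⟩ := hu ⟨⟨v, fun i j hij => φ.injective (by rw [← hv i, ← hv j, hij])⟩,
    fun {i j} => by
      rw [← θ.map_adj_iff]
      exact (hv i ▸ hv j ▸ φ.map_adj_iff)⟩
  exact hi (hvu i)

/-- `P₄` and its complement are both connected. -/
theorem pathGraph_four_exists_bichromatic (p : Fin 4 → Bool) (hp : ∃ i j, p i ∧ ¬ p j) :
    (∃ i j, p i ∧ ¬ p j ∧ (pathGraph 4).Adj i j) ∧
      ∃ i j, p i ∧ ¬ p j ∧ ¬ (pathGraph 4).Adj i j := by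
  simp only [pathGraph_adj]
  revert p
  decide

theorem isCograph_induce_union {s t : Set V}
    (hst : (∀ a ∈ s, ∀ b ∈ t, ¬ G.Adj a b) ∨ ∀ a ∈ s, ∀ b ∈ t, G.Adj a b)
    (hs : IsCograph (G.induce s)) (ht : IsCograph (G.induce t)) :
    IsCograph (G.induce (s ∪ t)) := by
  rw [isCograph_induce_iff] at hs ht ⊢
  intro φ
  by_contra! hφ
  obtain ⟨i, hi⟩ := ht φ
  obtain ⟨j, hj⟩ := hs φ
  have hmem_t : ∀ k, φ k ∉ s → φ k ∈ t := fun k hk => (hφ k).resolve_left hk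
  obtain ⟨⟨a, b, ha, hb, hab⟩, ⟨a', b', ha', hb', hab'⟩⟩ :=
    pathGraph_four_exists_bichromatic (fun k => decide (φ k ∈ s))
      ⟨i, j, by simpa using (hφ i).resolve_right hi, by simpa using hj⟩
  simp only [decide_eq_true_eq] at ha hb ha' hb'
  rcases hst with hnone | hall
  · exact hnone _ ha _ (hmem_t b hb) (φ.map_adj_iff.2 hab)
  · exact hab' (φ.map_adj_iff.1 (hall _ ha' _ (hmem_t b' hb')))

end Cograph

section Phi

variable {n : ℕ} {G : SimpleGraph (Fin n)}

theorem bddAbove_card_isCograph (G : SimpleGraph (Fin n)) :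
    BddAbove {k | ∃ s : Finset (Fin n), s.card = k ∧ IsCograph (G.induce (s : Set (Fin n)))} :=
  ⟨n, by rintro k ⟨s, rfl, -⟩; simpa using s.card_le_univ⟩

theorem card_le_phi {s : Finset (Fin n)} (hs : IsCograph (G.induce (s : Set (Fin n)))) :
    s.card ≤ phi G :=
  le_csSup (bddAbove_card_isCograph G) ⟨s, rfl, hs⟩

theorem exists_card_eq_phi (G : SimpleGraph (Fin n)) :
    ∃ s : Finset (Fin n), s.card = phi G ∧ IsCograph (G.induce (s : Set (Fin n))) :=
  have h : phi G ∈ {k | ∃ s : Finset (Fin n), s.card = k ∧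
      IsCograph (G.induce (s : Set (Fin n)))} :=
    Nat.sSup_mem ⟨0, ∅, rfl, fun ⟨e⟩ => by simpa using (e 0).2⟩ (bddAbove_card_isCograph G)
  h

theorem card_add_card_le_phi {X Y : Finset (Fin n)} (hXY : Disjoint X Y)
    (hX : IsCograph (G.induce (X : Set (Fin n)))) (hY : IsCograph (G.induce (Y : Set (Fin n))))
    (hcross : (∀ a ∈ X, ∀ b ∈ Y, ¬ G.Adj a b) ∨ ∀ a ∈ X, ∀ b ∈ Y, G.Adj a b) :
    X.card + Y.card ≤ phi G := by
  rw [← Finset.card_union_of_disjoint hXY]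
  refine card_le_phi ?_
  rw [Finset.coe_union]
  exact isCograph_induce_union hcross hX hY

end Phi

section FI

variable {I : ∀ n : ℕ, SimpleGraph (Fin n) → Prop}

theorem fI_le_phi {x : ℝ} {H : SimpleGraph (Fin ⌈x⌉₊)} (hH : I ⌈x⌉₊ H) : fI I x ≤ phi H :=
  Nat.sInf_le ⟨H, hH, rfl⟩

theorem exists_phi_eq_fI_natCast {n : ℕ} (h : ∃ G : SimpleGraph (Fin n), I n G) :
    ∃ G : SimpleGraph (Fin n), I n G ∧ phi G = fI I n := by
  obtain ⟨G, hG⟩ := h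
  rw [fI, Nat.ceil_natCast]
  exact Nat.sInf_mem (s := {m | ∃ G : SimpleGraph (Fin n), I n G ∧ phi G = m}) ⟨phi G, G, hG, rfl⟩

theorem exists_subset_isCograph_fI_le_card (hI : Hereditary I) {n : ℕ}
    {G : SimpleGraph (Fin n)} (hG : I n G) {x : ℝ} {s : Finset (Fin n)} (hx : x ≤ s.card) :
    ∃ X ⊆ s, IsCograph (G.induce (X : Set (Fin n))) ∧ fI I x ≤ X.card := by
  obtain ⟨t, hts, htx⟩ := Finset.exists_subset_card_eq (Nat.ceil_le.2 hx)
  let emb : Fin ⌈x⌉₊ ↪ Fin n := (t.orderEmbOfFin htx).toEmbedding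
  have hH : I ⌈x⌉₊ (G.comap emb) := hI _ _ G _ hG ⟨Embedding.comap emb G⟩
  obtain ⟨u, hu, hu_cog⟩ := exists_card_eq_phi (G.comap emb)
  refine ⟨u.map emb, ?_, ?_, ?_⟩
  · intro a ha
    obtain ⟨i, -, rfl⟩ := Finset.mem_map.1 ha
    exact hts (t.orderEmbOfFin_mem htx i)
  · rw [Finset.coe_map]
    exact isCograph_induce_image (Embedding.comap emb G) hu_cog
  · rw [Finset.card_map, hu]
    exact fI_le_phi hH

end FI

namespace Rel

variable {α β : Type*} (r : α → β → Prop) [DecidableRel r] {s : Finset α} {t : Finset β}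

theorem card_interedges_eq_sum_card_filter (s : Finset α) (t : Finset β) :
    (interedges r s t).card = ∑ a ∈ s, (t.filter (r a)).card := by
  rw [interedges, Finset.card_filter, Finset.sum_product]
  simp only [Finset.card_filter]

theorem card_interedges_le_of_edgeDensity_le {c : ℝ} (h : (edgeDensity r s t : ℝ) ≤ c) :
    ((interedges r s t).card : ℝ) ≤ c * s.card * t.card := by
  have hle : ((interedges r s t).card : ℝ) ≤ s.card * t.card :=
    mod_cast card_interedges_le_mul r s t
  rcases (mul_nonneg (s.card.cast_nonneg : (0 : ℝ) ≤ _) t.card.cast_nonneg).eq_or_lt with h0 | hpos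
  · rw [← h0] at hle
    rw [mul_assoc, ← h0]
    linarith
  · rw [edgeDensity, Rat.cast_div, Rat.cast_mul, Rat.cast_natCast, Rat.cast_natCast,
      Rat.cast_natCast, div_le_iff₀ hpos] at h
    linarith

theorem exists_half_subset_card_filter_le_of_edgeDensity_le {c : ℝ} (hc : 0 < c)
    (ht : t.Nonempty) (h : (edgeDensity r s t : ℝ) ≤ c) :
    ∃ s' ⊆ s, (s.card : ℝ) ≤ 2 * s'.card ∧
      ∀ a ∈ s', ((t.filter (r a)).card : ℝ) ≤ 2 * c * t.card := by
  set low := fun a => ((t.filter (r a)).card : ℝ) ≤ 2 * c * t.card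
  refine ⟨s.filter low, Finset.filter_subset _ _, ?_, fun a ha => (Finset.mem_filter.1 ha).2⟩
  have hsplit : ((s.filter low).card : ℝ) + (s.filter fun a => ¬ low a).card = s.card :=
    mod_cast Finset.card_filter_add_card_filter_not low
  have hhigh : (s.filter fun a => ¬ low a).card * (2 * c * t.card) ≤ c * s.card * t.card :=
    calc _ ≤ ∑ a ∈ s.filter fun a => ¬ low a, ((t.filter (r a)).card : ℝ) := by
          rw [← nsmul_eq_mul]
          exact Finset.card_nsmul_le_sum _ _ _ fun a ha => (not_le.1 (Finset.mem_filter.1 ha).2).le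
      _ ≤ ∑ a ∈ s, ((t.filter (r a)).card : ℝ) :=
          Finset.sum_le_sum_of_subset_of_nonneg (Finset.filter_subset _ _)
            fun _ _ _ => by positivity
      _ = (interedges r s t).card := by rw [card_interedges_eq_sum_card_filter]; push_cast; rfl
      _ ≤ c * s.card * t.card := card_interedges_le_of_edgeDensity_le r h
  have hct : 0 < c * t.card := mul_pos hc (mod_cast ht.card_pos)
  nlinarith

theorem exists_subset_forall_not_rel_card_le_add (X : Finset α) (t : Finset β) {d : ℝ}
    (hd : ∀ a ∈ X, ((t.filter (r a)).card : ℝ) ≤ d) :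
    ∃ t' ⊆ t, (∀ b ∈ t', ∀ a ∈ X, ¬ r a b) ∧ (t.card : ℝ) ≤ t'.card + X.card * d := by
  classical
  refine ⟨t.filter fun b => ∀ a ∈ X, ¬ r a b, Finset.filter_subset _ _,
    fun b hb => (Finset.mem_filter.1 hb).2, ?_⟩
  have hsplit := Finset.card_filter_add_card_filter_not (s := t) fun b => ∀ a ∈ X, ¬ r a b
  have hhit : (t.filter fun b => ¬ ∀ a ∈ X, ¬ r a b) ⊆ X.biUnion fun a => t.filter (r a) := by
    intro b hb
    simp only [Finset.mem_filter, not_forall, not_not] at hb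
    obtain ⟨hb, a, ha, hab⟩ := hb
    exact Finset.mem_biUnion.2 ⟨a, ha, Finset.mem_filter.2 ⟨hb, hab⟩⟩
  have hcount : ((t.filter fun b => ¬ ∀ a ∈ X, ¬ r a b).card : ℝ) ≤ X.card * d :=
    calc _ ≤ ((∑ a ∈ X, (t.filter (r a)).card : ℕ) : ℝ) :=
          mod_cast (Finset.card_le_card hhit).trans Finset.card_biUnion_le
      _ ≤ X.card * d := by
          push_cast
          rw [← nsmul_eq_mul]
          exact Finset.sum_le_card_nsmul _ _ _ hd
  rw [← hsplit, Nat.cast_add]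
  linarith

end Rel

theorem exists_isCograph_pair_of_edgeDensity_le {I : ∀ n : ℕ, SimpleGraph (Fin n) → Prop}
    (hI : Hereditary I) {n : ℕ} {G : SimpleGraph (Fin n)} (hG : I n G)
    {r : Fin n → Fin n → Prop} [DecidableRel r] {A B : Finset (Fin n)} (hB : B.Nonempty)
    {c x y : ℝ} (hc : 0 < c) (hr : (Rel.edgeDensity r A B : ℝ) ≤ c)
    (hphi : (phi G : ℝ) < 1 / (4 * c)) (hx : x ≤ A.card / 2) (hy : y ≤ B.card / 2) :
    ∃ X ⊆ A, ∃ Y ⊆ B, IsCograph (G.induce (X : Set (Fin n))) ∧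
      IsCograph (G.induce (Y : Set (Fin n))) ∧ fI I x ≤ X.card ∧ fI I y ≤ Y.card ∧
      ∀ a ∈ X, ∀ b ∈ Y, ¬ r a b := by
  obtain ⟨A', hA'A, hA', hdeg⟩ :=
    Rel.exists_half_subset_card_filter_le_of_edgeDensity_le r hc hB hr
  obtain ⟨X, hXA', hX, hxX⟩ :=
    exists_subset_isCograph_fI_le_card hI hG (x := x) (s := A') (by linarith)
  obtain ⟨B', hB'B, hB'X, hcount⟩ :=
    Rel.exists_subset_forall_not_rel_card_le_add r X B fun a ha => hdeg a (hXA' ha)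
  have hy' : y ≤ B'.card := by
    have hXphi : (X.card : ℝ) ≤ phi G := mod_cast card_le_phi hX
    have hBpos : (0 : ℝ) < 2 * c * B.card := by have := hB.card_pos; positivity
    have hloss : (X.card : ℝ) * (2 * c * B.card) < B.card / 2 :=
      calc _ ≤ (phi G : ℝ) * (2 * c * B.card) := by gcongr
        _ < 1 / (4 * c) * (2 * c * B.card) := by gcongr
        _ = B.card / 2 := by field_simp; ring
    linarith
  obtain ⟨Y, hYB', hY, hyY⟩ := exists_subset_isCograph_fI_le_card hI hG hy'
  exact ⟨X, hXA'.trans hA'A, Y, hYB'.trans hB'B, hX, hY, hxX, hyY,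
    fun a ha b hb => hB'X b (hYB' hb) a ha⟩

theorem f_recursion_step_general
    (I : ∀ n : ℕ, SimpleGraph (Fin n) → Prop) (hI : Hereditary I)
    (hall : ∀ m : ℕ, ∃ G : SimpleGraph (Fin m), I m G)
    (σ ε : ℝ)
    (hdens : ∀ (n : ℕ) (G : SimpleGraph (Fin n)), 2 ≤ n → I n G →
      ∀ c : ℝ, 0 ≤ c → c ≤ 1 / 2 →
        ∃ A B : Finset (Fin n), Disjoint A B ∧ A.Nonempty ∧ B.Nonempty ∧
          c ^ σ * n ≤ (A.card : ℝ) ∧ ε * n ≤ (B.card : ℝ) ∧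
          ((G.edgeDensity A B : ℝ) ≤ c ∨ 1 - c ≤ (G.edgeDensity A B : ℝ)))
    (n : ℕ) (hn : 2 ≤ n) (c : ℝ) (hc0 : 0 < c) (hc : c ≤ 1 / 2) :
    1 / (4 * c) ≤ (fI I n : ℝ) ∨
      fI I (c ^ σ * n / 2) + fI I (ε * n / 2) ≤ fI I n := by
  refine or_iff_not_imp_left.2 fun hsmall => ?_
  obtain ⟨G, hG, hGphi⟩ := exists_phi_eq_fI_natCast (hall n)
  rw [← hGphi, not_le] at hsmall
  rw [← hGphi]
  obtain ⟨A, B, hAB, hA, hB, hAcard, hBcard, hdich⟩ := hdens n G hn hG c hc0.le hc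
  have hx : c ^ σ * n / 2 ≤ A.card / 2 := by linarith
  have hy : ε * n / 2 ≤ B.card / 2 := by linarith
  rcases hdich with hsparse | hdense
  · obtain ⟨X, hXA, Y, hYB, hX, hY, hxX, hyY, hXY⟩ :=
      exists_isCograph_pair_of_edgeDensity_le hI hG hB hc0 hsparse hsmall hx hy
    exact (add_le_add hxX hyY).trans (card_add_card_le_phi (hAB.mono hXA hYB) hX hY (.inl hXY))
  · have hcompl : (Rel.edgeDensity (fun a b => ¬ G.Adj a b) A B : ℝ) ≤ c := by
      have := congrArg (Rat.cast : ℚ → ℝ) (Rel.edgeDensity_add_edgeDensity_compl G.Adj hA hB)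
      push_cast at this
      linarith [show (G.edgeDensity A B : ℝ) = Rel.edgeDensity G.Adj A B from rfl]
    obtain ⟨X, hXA, Y, hYB, hX, hY, hxX, hyY, hXY⟩ :=
      exists_isCograph_pair_of_edgeDensity_le hI hG hB hc0 hcompl hsmall hx hy
    exact (add_le_add hxX hyY).trans (card_add_card_le_phi (hAB.mono hXA hYB) hX hY
      (.inr fun a ha b hb => not_not.1 (hXY a ha b hb)))

/-- Step (1): for all `n ≥ 2` and `0 < c ≤ 1/2`, either `f(n) ≥ 1/(4c)` or
`f(n) ≥ f(c^σ·n/2) + f(ε·n/2)`. -/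
theorem f_recursion_step
    (I : ∀ n : ℕ, SimpleGraph (Fin n) → Prop) (hI : Hereditary I)
    (hall : ∀ m : ℕ, ∃ G : SimpleGraph (Fin m), I m G)
    (σ ε : ℝ) (hσ : 1 ≤ σ) (hε0 : 0 < ε) (hε1 : ε ≤ 1)
    (hdens : ∀ (n : ℕ) (G : SimpleGraph (Fin n)), 2 ≤ n → I n G →
      ∀ c : ℝ, 0 ≤ c → c ≤ 1 / 2 →
        ∃ A B : Finset (Fin n), Disjoint A B ∧ A.Nonempty ∧ B.Nonempty ∧
          c ^ σ * n ≤ (A.card : ℝ) ∧ ε * n ≤ (B.card : ℝ) ∧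
          ((G.edgeDensity A B : ℝ) ≤ c ∨ 1 - c ≤ (G.edgeDensity A B : ℝ)))
    (n : ℕ) (hn : 2 ≤ n) (c : ℝ) (hc0 : 0 < c) (hc : c ≤ 1 / 2) :
    1 / (4 * c) ≤ (fI I n : ℝ) ∨
      fI I (c ^ σ * n / 2) + fI I (ε * n / 2) ≤ fI I n :=
  f_recursion_step_general I hI hall σ ε hdens n hn c hc0 hc
end
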